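/- Suppose u : [0,∞) → ℝ is continuously differentiable with u(0) = u₀ ∈ (0,1), κ > 0, and κ u'(t) = u(t)(1 - u(t) - ∫_0^t u(x) dx) for all t ≥ 0. Then u(t) < 1 for all t ≥ 0. -/

import Mathlib

/-!
Writing `u' = u g` with `g = (1 - u - ∫₀ᵗ u) / κ`, the function `u · exp (-∫₀ᵗ g)` has zero
derivative, so `u(t) = u₀ exp (∫₀ᵗ g) > 0`. Hence at any `t > 0` with `u(t) = 1` we get
`κ u'(t) = -∫₀ᵗ u < 0`: the level `1` can only be crossed downwards. By the comparison principle
`u ≤ 1`, and a time with `u = 1` would be a local maximum with nonzero derivative.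
-/

open Set Real intervalIntegral

section Primitive

variable {E : Type*} [NormedAddCommGroup E] [NormedSpace ℝ E] {f : ℝ → E} {a : ℝ}

theorem continuousOn_primitive_Ici (hf : ContinuousOn f (Ici a)) :
    ContinuousOn (fun t => ∫ x in a..t, f x) (Ici a) := by
  intro t ht
  have hcont : ContinuousWithinAt (fun t => ∫ x in a..t, f x) (Icc a (t + 1)) t :=
    continuousWithinAt_primitive (MeasureTheory.measure_singleton t) <| by
      rw [min_self, max_eq_right (by linarith [mem_Ici.1 ht] : a ≤ t + 1)]
      exact (hf.mono Icc_subset_Ici_self).intervalIntegrable_of_Icc (by linarith [mem_Ici.1 ht])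
  refine hcont.mono_of_mem_nhdsWithin (Filter.mem_of_superset
    (inter_mem_nhdsWithin (Ici a) (Iio_mem_nhds (lt_add_one t))) fun x hx => ⟨hx.1, hx.2.le⟩)

theorem hasDerivWithinAt_integral_Ici [CompleteSpace E] (hf : ContinuousOn f (Ici a)) {t : ℝ}
    (ht : a ≤ t) : HasDerivWithinAt (fun s => ∫ x in a..s, f x) (f t) (Ici t) t := by
  have hIoi : Ioi t ⊆ Ici a := Ioi_subset_Ici_self.trans (Ici_subset_Ici.2 ht)
  exact integral_hasDerivWithinAt_right
    ((hf.mono Icc_subset_Ici_self).intervalIntegrable_of_Icc ht)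
    ((hf.mono hIoi).stronglyMeasurableAtFilter_nhdsWithin measurableSet_Ioi t)
    ((hf t ht).mono hIoi)

end Primitive

theorem eq_mul_exp_integral_of_hasDerivAt_mul {u g : ℝ → ℝ} {a : ℝ} (hg : ContinuousOn g (Ici a))
    (hu : ∀ t, a ≤ t → HasDerivAt u (u t * g t) t) {t : ℝ} (ht : a ≤ t) :
    u t = u a * exp (∫ s in a..t, g s) := by
  set G : ℝ → ℝ := fun s => ∫ x in a..s, g x
  have hconst : ∀ s ∈ Icc a t, u s * exp (-G s) = u a * exp (-G a) := by
    refine constant_of_has_deriv_right_zero ?_ fun s hs => ?_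
    · have hu_cont : ContinuousOn u (Icc a t) := fun s hs =>
        (hu s hs.1).continuousAt.continuousWithinAt
      exact hu_cont.mul ((continuousOn_primitive_Ici hg).mono Icc_subset_Ici_self).neg.rexp
    · exact ((hu s hs.1).hasDerivWithinAt.mul
        (hasDerivWithinAt_integral_Ici hg hs.1).neg.exp).congr_deriv (by ring)
  have := hconst t ⟨ht, le_rfl⟩
  simp only [G, integral_same, neg_zero, exp_zero, mul_one] at this
  rw [← this, mul_assoc, ← exp_add, neg_add_cancel, exp_zero, mul_one]

theorem lt_of_hasDerivAt_neg_of_eq {f f' : ℝ → ℝ} {a c : ℝ}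
    (hf : ∀ x, a ≤ x → HasDerivAt f (f' x) x) (ha : f a < c)
    (hc : ∀ x, a < x → f x = c → f' x < 0) {x : ℝ} (hx : a ≤ x) : f x < c := by
  have hle : ∀ x, a ≤ x → f x ≤ c := fun x hx =>
    image_le_of_deriv_right_lt_deriv_boundary' (B := fun _ => c) (B' := 0)
      (fun y hy => (hf y hy.1).continuousAt.continuousWithinAt)
      (fun y hy => (hf y hy.1).hasDerivWithinAt) ha.le continuousOn_const
      (fun _ _ => hasDerivWithinAt_const _ _ c)
      (fun y hy hyc => hc y (hy.1.lt_of_ne fun hay => ha.ne (hay ▸ hyc)) hyc) ⟨hx, le_rfl⟩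
  rcases hx.eq_or_lt with rfl | hax
  · exact ha
  refine (hle x hx).lt_of_ne fun hxc => ?_
  have hmax : IsLocalMax f x := by
    filter_upwards [Ioi_mem_nhds hax] with y hy
    exact hxc ▸ hle y hy.le
  exact (hc x hax hxc).ne (hmax.hasDerivAt_eq_zero (hf x hx))

theorem volterra_lt_one_general (u : ℝ → ℝ) (κ u₀ : ℝ) (hκ : 0 < κ)
    (hu₀ : u₀ ∈ Set.Ioo (0:ℝ) 1)
    (h0 : u 0 = u₀)
    (hode : ∀ t : ℝ, 0 ≤ t → ∃ d : ℝ, HasDerivAt u d t ∧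
      κ * d = u t * (1 - u t - ∫ x in (0:ℝ)..t, u x)) :
    ∀ t : ℝ, 0 ≤ t → u t < 1 := by
  have hu : ContinuousOn u (Ici 0) := fun t ht =>
    (hode t ht).choose_spec.1.continuousAt.continuousWithinAt
  set g : ℝ → ℝ := fun t => (1 - u t - ∫ x in (0:ℝ)..t, u x) / κ
  have hg : ContinuousOn g (Ici 0) :=
    ((continuousOn_const.sub hu).sub (continuousOn_primitive_Ici hu)).div_const κ
  have hderiv : ∀ t, 0 ≤ t → HasDerivAt u (u t * g t) t := by
    intro t ht
    obtain ⟨d, hd, hκd⟩ := hode t ht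
    convert hd using 1
    simp only [g]
    field_simp
    linarith
  have hpos : ∀ t, 0 ≤ t → 0 < u t := fun t ht => by
    rw [eq_mul_exp_integral_of_hasDerivAt_mul hg hderiv ht, h0]
    exact mul_pos hu₀.1 (exp_pos _)
  refine fun t ht => lt_of_hasDerivAt_neg_of_eq hderiv (h0 ▸ hu₀.2) (fun s hs hus => ?_) ht
  have hF : 0 < ∫ x in (0:ℝ)..s, u x := intervalIntegral_pos_of_pos_on
    ((hu.mono Icc_subset_Ici_self).intervalIntegrable_of_Icc hs.le)
    (fun x hx => hpos x hx.1.le) hs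
  simp only [g, hus, sub_self, zero_sub, one_mul]
  exact div_neg_of_neg_of_pos (neg_neg_of_pos hF) hκ

theorem volterra_lt_one (u : ℝ → ℝ) (κ u₀ : ℝ) (hκ : 0 < κ)
    (hu₀ : u₀ ∈ Set.Ioo (0:ℝ) 1)
    (hC1 : ContDiffOn ℝ 1 u (Set.Ici 0)) (h0 : u 0 = u₀)
    (hode : ∀ t : ℝ, 0 ≤ t → ∃ d : ℝ, HasDerivAt u d t ∧
      κ * d = u t * (1 - u t - ∫ x in (0:ℝ)..t, u x)) :
    ∀ t : ℝ, 0 ≤ t → u t < 1 :=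
  volterra_lt_one_general u κ u₀ hκ hu₀ h0 hode
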